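/- For every n ≥ 1, τ₃(n)/τ₃(n−1) < 3, i.e., τ₃(n) < 3·τ₃(n−1). -/

import Mathlib

open Finset Filter Topology

/-- Cells of a Young diagram given by its list of column lengths:
`(c, r)` means row `r` of column `c`. -/
def Cells (lam : List ℕ) : Set (ℕ × ℕ) :=
  {p | p.1 < lam.length ∧ p.2 < lam.getD p.1 0}

/-- `T` is a standard Young tableau of (column-lengths) shape `lam`:
it is a bijection from the cells onto `{1, …, lam.sum}`, strictly
increasing along each column and each row, and `0` outside the diagram. -/
def IsSYT (lam : List ℕ) (T : ℕ × ℕ → ℕ) : Prop :=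
  Set.BijOn T (Cells lam) (Set.Icc 1 lam.sum) ∧
  (∀ p ∈ Cells lam, ∀ q ∈ Cells lam, p.1 = q.1 → p.2 < q.2 → T p < T q) ∧
  (∀ p ∈ Cells lam, ∀ q ∈ Cells lam, p.2 = q.2 → p.1 < q.1 → T p < T q) ∧
  (∀ p, p ∉ Cells lam → T p = 0)

/-- The number of standard Young tableaux of a fixed column-shape. -/
noncomputable def sytCount (lam : List ℕ) : ℕ :=
  Nat.card {T : ℕ × ℕ → ℕ // IsSYT lam T}

/-- `tau s n` : the number of standard Young tableaux on `n` cells whose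
shape has at most `s` columns. -/
noncomputable def tau (s n : ℕ) : ℕ :=
  Nat.card {p : List ℕ × (ℕ × ℕ → ℕ) //
    p.1.length ≤ s ∧ p.1.Pairwise (· ≥ ·) ∧ (∀ x ∈ p.1, 0 < x) ∧
    p.1.sum = n ∧ IsSYT p.1 p.2}

/-!
Removing the largest entry `n` from a standard Young tableau with at most `s` columns leaves such a
tableau on `n - 1` cells. The entry `n` sat at the bottom of some column `c < s`, and the tableau
is recovered from `c` and the smaller tableau, so the tableaux on `n` cells embed into
`{0, …, s - 1} ×` (tableaux on `n - 1` cells). The smaller tableau still has at least `c`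
columns, so for `s ≥ 3` the pairs `(s - 1, y)` with `y` a single column are never hit.
-/

open Function

namespace List

theorem pairwise_ge_iff_antitone_getD (l : List ℕ) :
    l.Pairwise (· ≥ ·) ↔ Antitone (l.getD · 0) := by
  rw [pairwise_iff_getElem]
  constructor
  · intro h i j hij
    by_cases hj : j < l.length
    · dsimp only
      rw [getD_eq_getElem _ _ hj, getD_eq_getElem _ _ (hij.trans_lt hj)]
      rcases hij.lt_or_eq with hij | rfl
      · exact h i j _ hj hij
      · exact le_rfl
    · dsimp only
      rw [getD_eq_default _ _ (not_lt.mp hj)]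
      exact Nat.zero_le _
  · intro h i j hi hj hij
    have := h hij.le
    simp only [getD_eq_getElem _ _ hi, getD_eq_getElem _ _ hj] at this
    exact this

theorem lt_length_iff_getD_pos {l : List ℕ} (hl : ∀ x ∈ l, 0 < x) {i : ℕ} :
    i < l.length ↔ 0 < l.getD i 0 := by
  refine ⟨fun hi => getD_eq_getElem _ _ hi ▸ hl _ (getElem_mem hi), fun h => ?_⟩
  by_contra hi
  rw [getD_eq_default _ _ (not_lt.mp hi)] at h
  exact h.false

theorem eq_of_forall_getD_eq {l l' : List ℕ} (hl : ∀ x ∈ l, 0 < x) (hl' : ∀ x ∈ l', 0 < x)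
    (h : ∀ i, l.getD i 0 = l'.getD i 0) : l = l' := by
  have hlen : l.length = l'.length := eq_of_forall_lt_iff fun i => by
    rw [lt_length_iff_getD_pos hl, lt_length_iff_getD_pos hl', h]
  refine ext_getElem hlen fun i hi hi' => ?_
  rw [← getD_eq_getElem _ 0 hi, ← getD_eq_getElem _ 0 hi', h]

theorem sum_eq_sum_range_getD {l : List ℕ} {N : ℕ} (h : l.length ≤ N) :
    l.sum = ∑ i ∈ Finset.range N, l.getD i 0 := by
  induction l generalizing N with
  | nil => simp
  | cons a l ih =>
    obtain ⟨N, rfl⟩ : ∃ M, N = M + 1 := ⟨N - 1, by rw [length_cons] at h; omega⟩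
    rw [Finset.sum_range_succ', sum_cons, ih (by simpa using h)]
    simp [add_comm]

theorem exists_getD_eq_update {L : List ℕ} (hpos : ∀ x ∈ L, 0 < x) {c r : ℕ}
    (hc : L.getD c 0 = r + 1) (hcorner : ∀ j, c < j → L.getD j 0 ≤ r) :
    ∃ L' : List ℕ, (∀ x ∈ L', 0 < x) ∧ c ≤ L'.length ∧ L'.length ≤ L.length ∧
      ∀ j, L'.getD j 0 = update (L.getD · 0) c r j := by
  have hcL : c < L.length := (lt_length_iff_getD_pos hpos).mpr (by omega)
  rcases Nat.eq_zero_or_pos r with rfl | hr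
  · have hlen : L.length = c + 1 := by
      by_contra hne
      have := (lt_length_iff_getD_pos hpos (i := c + 1)).mp (by omega)
      have := hcorner (c + 1) (by omega)
      omega
    refine ⟨L.dropLast, fun x hx => hpos x (dropLast_subset L hx), by simp [hlen], by simp,
      fun j => ?_⟩
    rcases lt_trichotomy j c with hj | rfl | hj
    · simp [update_of_ne hj.ne, hlen, hj, getElem?_eq_getElem (show j < L.length by omega)]
    · simp [hlen]
    · have := getD_eq_default L 0 (n := j) (by omega)
      simp_all [update_of_ne hj.ne', getElem?_dropLast]
  · refine ⟨L.set c r, ?_, by rw [length_set]; omega, by simp, fun j => ?_⟩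
    · intro x hx
      rcases mem_or_eq_of_mem_set hx with h | rfl
      exacts [hpos x h, hr]
    · rcases eq_or_ne j c with rfl | hj
      · simp [hcL]
      · simp [update_of_ne hj, Ne.symm hj]

theorem sum_add_one_of_getD_eq_update {L L' : List ℕ} {c r : ℕ} (hc : L.getD c 0 = r + 1)
    (h : ∀ j, L'.getD j 0 = update (L.getD · 0) c r j) (hlen : L'.length ≤ L.length) :
    L'.sum + 1 = L.sum := by
  have hcL : c ∈ Finset.range L.length := by
    by_contra hcL
    rw [getD_eq_default _ _ (by simpa using hcL)] at hc
    omega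
  rw [sum_eq_sum_range_getD hlen, sum_eq_sum_range_getD le_rfl,
    Finset.sum_congr rfl fun j _ => h j, Finset.sum_update_of_mem hcL,
    ← Finset.add_sum_erase _ _ hcL, hc, Finset.sdiff_singleton_eq_erase]
  ring

end List

theorem Antitone.update {α β : Type*} [LinearOrder α] [Preorder β] [DecidableEq α]
    {f : α → β} (hf : Antitone f) {c : α} {r : β} (hc : r ≤ f c)
    (hcorner : ∀ j, c < j → f j ≤ r) : Antitone (update f c r) := by
  intro i j hij
  simp only [update_apply]
  split_ifs with hj hi hi
  · exact le_rfl
  · exact hc.trans (hf (hj ▸ hij))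
  · exact hcorner j (lt_of_le_of_ne (hi ▸ hij) (Ne.symm hj))
  · exact hf hij

theorem mem_cells_iff {lam : List ℕ} {p : ℕ × ℕ} : p ∈ Cells lam ↔ p.2 < lam.getD p.1 0 := by
  refine ⟨And.right, fun h => ⟨?_, h⟩⟩
  by_contra hp
  rw [List.getD_eq_default _ _ (not_lt.mp hp)] at h
  exact Nat.not_lt_zero _ h

theorem cells_eq_diff_of_getD_eq_update {L L' : List ℕ} {c r : ℕ} (hc : L.getD c 0 = r + 1)
    (h : ∀ j, L'.getD j 0 = update (L.getD · 0) c r j) : Cells L' = Cells L \ {(c, r)} := by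
  ext ⟨i, k⟩
  simp only [mem_cells_iff, h, Set.mem_sdiff, Set.mem_singleton_iff, Prod.mk.injEq, update_apply]
  split_ifs with hi
  · subst hi; omega
  · simp [hi]

namespace IsSYT

variable {lam : List ℕ} {T : ℕ × ℕ → ℕ}

theorem le_sum (hT : IsSYT lam T) {p : ℕ × ℕ} (hp : p ∈ Cells lam) : T p ≤ lam.sum :=
  (hT.1.mapsTo hp).2

theorem getD_eq_succ_of_eq_sum (hT : IsSYT lam T) {c r : ℕ} (hp : (c, r) ∈ Cells lam)
    (hTp : T (c, r) = lam.sum) : lam.getD c 0 = r + 1 := by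
  refine le_antisymm ?_ (mem_cells_iff.mp hp)
  by_contra! h
  have hq : (c, r + 1) ∈ Cells lam := mem_cells_iff.mpr h
  have := hT.2.1 _ hp _ hq rfl r.lt_succ_self
  have := hT.le_sum hq
  omega

theorem getD_le_of_eq_sum (hT : IsSYT lam T) {c r : ℕ} (hp : (c, r) ∈ Cells lam)
    (hTp : T (c, r) = lam.sum) {j : ℕ} (hj : c < j) : lam.getD j 0 ≤ r := by
  by_contra! h
  have hq : (j, r) ∈ Cells lam := mem_cells_iff.mpr h
  have := hT.2.2.1 _ hp _ hq rfl hj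
  have := hT.le_sum hq
  omega

theorem update_of_cells_eq_diff (hT : IsSYT lam T) {lam' : List ℕ} {p : ℕ × ℕ}
    (hp : p ∈ Cells lam) (hTp : T p = lam.sum) (hcells : Cells lam' = Cells lam \ {p})
    (hsum : lam'.sum + 1 = lam.sum) : IsSYT lam' (update T p 0) := by
  obtain ⟨hbij, hcol, hrow, hzero⟩ := hT
  have hT : Set.EqOn T (update T p 0) (Cells lam') := fun q hq =>
    (update_of_ne (hcells ▸ hq).2 _ _).symm
  refine ⟨?_, fun q hq q' hq' => ?_, fun q hq q' hq' => ?_, fun q hq => ?_⟩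
  · have := hbij.sdiff_singleton hp
    rw [← hcells, hTp, Set.Icc_sdiff_right, ← hsum, Set.Ico_add_one_right_eq_Icc] at this
    exact this.congr hT
  · rw [← hT hq, ← hT hq']
    rw [hcells] at hq hq'
    exact hcol q hq.1 q' hq'.1
  · rw [← hT hq, ← hT hq']
    rw [hcells] at hq hq'
    exact hrow q hq.1 q' hq'.1
  · rcases eq_or_ne q p with rfl | hqp
    · exact update_self _ _ _
    · rw [update_of_ne hqp]
      exact hzero q fun h => hq (hcells ▸ ⟨h, hqp⟩)

end IsSYT

def sytSet (s n : ℕ) : Set (List ℕ × (ℕ × ℕ → ℕ)) :=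
  {p | p.1.length ≤ s ∧ p.1.Pairwise (· ≥ ·) ∧ (∀ x ∈ p.1, 0 < x) ∧ p.1.sum = n ∧ IsSYT p.1 p.2}

theorem tau_eq_ncard (s n : ℕ) : tau s n = (sytSet s n).ncard :=
  Nat.card_coe_set_eq _

-- Shapes are compared through their column-length functions `i ↦ lam.getD i 0`, on which adding
-- a cell is a `Function.update`.
def toColLengths (x : List ℕ × (ℕ × ℕ → ℕ)) : (ℕ → ℕ) × (ℕ × ℕ → ℕ) :=
  (fun i => x.1.getD i 0, x.2)

def addCell (n c : ℕ) (y : (ℕ → ℕ) × (ℕ × ℕ → ℕ)) : (ℕ → ℕ) × (ℕ × ℕ → ℕ) :=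
  (update y.1 c (y.1 c + 1), update y.2 (c, y.1 c) n)

def growthSites (s m : ℕ) : Set (ℕ × (List ℕ × (ℕ × ℕ → ℕ))) :=
  {cy | cy.1 < s ∧ cy.2 ∈ sytSet s m ∧ cy.1 ≤ cy.2.1.length}

theorem growthSites_subset (s m : ℕ) : growthSites s m ⊆ Set.Iio s ×ˢ sytSet s m :=
  fun _ h => ⟨h.1, h.2.1⟩

theorem injOn_toColLengths (s n : ℕ) : Set.InjOn toColLengths (sytSet s n) :=
  fun _ hx _ hy h =>
    Prod.ext (List.eq_of_forall_getD_eq hx.2.2.1 hy.2.2.1 (congrFun (Prod.ext_iff.mp h).1))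
      (Prod.ext_iff.mp h).2

theorem image_toColLengths_sytSet_subset {s n : ℕ} (hn : n ≠ 0) :
    toColLengths '' sytSet s n ⊆
      (fun cy => addCell n cy.1 (toColLengths cy.2)) '' growthSites s (n - 1) := by
  rintro _ ⟨⟨L, T⟩, ⟨hlen, hsort, hpos, hsum, hT⟩, rfl⟩
  dsimp only at hlen hsort hpos hsum hT
  obtain ⟨⟨c, r⟩, hp, hTp⟩ : ∃ p ∈ Cells L, T p = L.sum :=
    hT.1.surjOn ⟨Nat.one_le_iff_ne_zero.mpr (hsum ▸ hn), le_rfl⟩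
  have hc := hT.getD_eq_succ_of_eq_sum hp hTp
  have hcorner := fun j => hT.getD_le_of_eq_sum hp hTp (j := j)
  obtain ⟨L', hpos', hcL', hlen', hgetD⟩ := List.exists_getD_eq_update hpos hc hcorner
  have hsort' : L'.Pairwise (· ≥ ·) := by
    rw [List.pairwise_ge_iff_antitone_getD] at hsort ⊢
    exact funext hgetD ▸ hsort.update (hc ▸ r.le_succ) hcorner
  have hsum' := List.sum_add_one_of_getD_eq_update hc hgetD hlen'
  have hT' := hT.update_of_cells_eq_diff hp hTp (cells_eq_diff_of_getD_eq_update hc hgetD) hsum'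
  refine ⟨(c, (L', update T (c, r) 0)),
    ⟨hp.1.trans_le hlen, ⟨hlen'.trans hlen, hsort', hpos', by dsimp only; omega, hT'⟩, hcL'⟩, ?_⟩
  simp only [toColLengths, addCell, funext hgetD, update_self, update_idem]
  rw [← hc, update_eq_self, ← hsum, ← hTp, update_eq_self]

theorem sytSet_zero_subset (s : ℕ) : sytSet s 0 ⊆ {([], 0)} := by
  rintro ⟨L, T⟩ ⟨-, -, hpos, hsum, hT⟩
  obtain rfl : L = [] := List.eq_nil_iff_forall_not_mem.mpr fun a ha =>
    (hpos a ha).ne' (List.sum_eq_zero_iff.mp hsum a ha)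
  exact Prod.ext rfl (funext fun p => hT.2.2.2 p fun hp => Nat.not_lt_zero _ hp.1)

theorem finite_sytSet (s : ℕ) : ∀ n, (sytSet s n).Finite
  | 0 => (Set.finite_singleton _).subset (sytSet_zero_subset s)
  | n + 1 => Set.Finite.of_finite_image
      ((((Set.finite_Iio s).prod (finite_sytSet s n)).subset (growthSites_subset s n)).image _
        |>.subset (image_toColLengths_sytSet_subset n.succ_ne_zero))
      (injOn_toColLengths s (n + 1))

theorem isSYT_column {L : List ℕ} {m : ℕ} (hsum : L.sum = m)
    (hcells : ∀ p, p ∈ Cells L ↔ p.1 = 0 ∧ p.2 < m) :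
    IsSYT L fun p => if p.1 = 0 ∧ p.2 < m then p.2 + 1 else 0 := by
  set T : ℕ × ℕ → ℕ := fun p => if p.1 = 0 ∧ p.2 < m then p.2 + 1 else 0
  have hT : ∀ p ∈ Cells L, T p = p.2 + 1 := fun p hp => if_pos ((hcells p).mp hp)
  refine ⟨?_, fun p hp q hq _ hpq => ?_, fun p hp q hq _ hpq => ?_, fun p hp => ?_⟩
  · rw [hsum]
    refine ⟨fun p hp => ?_, fun p hp q hq h => ?_, fun k hk => ?_⟩
    · have := (hcells p).mp hp
      rw [Set.mem_Icc, hT p hp]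
      omega
    · have := (hcells p).mp hp
      have := (hcells q).mp hq
      rw [hT p hp, hT q hq] at h
      exact Prod.ext (by omega) (by omega)
    · rw [Set.mem_Icc] at hk
      have hk' : (0, k - 1) ∈ Cells L := (hcells _).mpr ⟨rfl, by omega⟩
      exact ⟨(0, k - 1), hk', by rw [hT _ hk']; omega⟩
  · rw [hT p hp, hT q hq]
    omega
  · rw [hcells] at hp hq
    omega
  · exact if_neg (mt (hcells p).mpr hp)

theorem exists_mem_sytSet_length_le_one {s : ℕ} (hs : 1 ≤ s) (m : ℕ) :
    ∃ y ∈ sytSet s m, y.1.length ≤ 1 := by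
  obtain ⟨L, hlen, hsort, hpos, hsum, hcells⟩ : ∃ L : List ℕ, L.length ≤ 1 ∧
      L.Pairwise (· ≥ ·) ∧ (∀ x ∈ L, 0 < x) ∧ L.sum = m ∧
      ∀ p, p ∈ Cells L ↔ p.1 = 0 ∧ p.2 < m := by
    rcases Nat.eq_zero_or_pos m with rfl | hm
    · exact ⟨[], by simp, .nil, by simp, rfl, fun p => by simp [Cells]⟩
    · refine ⟨[m], le_rfl, List.pairwise_singleton _ m, by simpa, by simp, fun p => ?_⟩
      rw [mem_cells_iff]
      rcases eq_or_ne p.1 0 with h | h <;> simp [h]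
  exact ⟨(L, _), ⟨hlen.trans hs, hsort, hpos, hsum, isSYT_column hsum hcells⟩, hlen⟩

theorem tau_lt_mul_tau_sub_one {s n : ℕ} (hs : 3 ≤ s) (hn : n ≠ 0) :
    tau s n < s * tau s (n - 1) := by
  obtain ⟨y, hy, hy1⟩ := exists_mem_sytSet_length_le_one (s := s) (by omega) (n - 1)
  have hfin := (Set.finite_Iio s).prod (finite_sytSet s (n - 1))
  have hsites : growthSites s (n - 1) ⊂ Set.Iio s ×ˢ sytSet s (n - 1) :=
    (Set.ssubset_iff_of_subset (growthSites_subset s (n - 1))).mpr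
      ⟨(s - 1, y), ⟨show s - 1 < s by omega, hy⟩, fun h => by
        have : s - 1 ≤ y.1.length := h.2.2
        omega⟩
  have hsitesFin := hfin.subset (growthSites_subset s (n - 1))
  rw [tau_eq_ncard, tau_eq_ncard, ← (injOn_toColLengths s n).ncard_image]
  calc (toColLengths '' sytSet s n).ncard
      ≤ ((fun cy => addCell n cy.1 (toColLengths cy.2)) '' growthSites s (n - 1)).ncard :=
        Set.ncard_le_ncard (image_toColLengths_sytSet_subset hn) (hsitesFin.image _)
    _ ≤ (growthSites s (n - 1)).ncard := Set.ncard_image_le hsitesFin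
    _ < (Set.Iio s ×ˢ sytSet s (n - 1)).ncard := Set.ncard_lt_ncard hsites hfin
    _ = s * (sytSet s (n - 1)).ncard := by rw [Set.ncard_prod, Set.ncard_Iio_nat]

theorem stmt10 (n : ℕ) (hn : 1 ≤ n) : tau 3 n < 3 * tau 3 (n - 1) :=
  tau_lt_mul_tau_sub_one le_rfl (by omega)
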